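/- Let r ≥ 1, S ⊆ Fin r, and let {A,B} and {C,D} be two bipartitions of Fin r. Let ψ_A, ψ_B, φ_C, φ_D be states of the qubits in A, B, C, D respectively, and suppose CZ_S(ψ_A ⊗ ψ_B) = φ_C ⊗ φ_D. Then either CZ_S disappears on ψ_A ⊗ ψ_B, or there exists T ⊆ S such that T is a subset of one of the sets A, B, C, D and CZ_S(ψ_A ⊗ ψ_B) = CZ_T(ψ_A ⊗ ψ_B) ≠ ψ_A ⊗ ψ_B. -/

import Mathlib

/-!
Write `u = ψ_A ⊗ ψ_B`. Both `u` and `CZ_S u` are product states, so the 2 × 2 minors of their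
amplitude matrices across the cuts `A | B` and `C | D` vanish, and `CZ_S` does not change the
support. If `CZ_S` acts nontrivially, some `e` in the support has all qubits of `S` equal to `1`.
Were there support points `p`, `q` with a `0` on `S ∩ A ∩ C` and on `S ∩ B ∩ D`, splicing them
into `e` would give a minor of `u` and the corresponding minor of `CZ_S u` that agree except for
the sign at `e`, forcing a product of nonzero amplitudes to vanish. So one of `S ∩ A ∩ C`,
`S ∩ B ∩ D`, and likewise one of `S ∩ A ∩ D`, `S ∩ B ∩ C`, is identically `1` on the support.
In each of the four combinations `S ∩ E` is identically `1` on the support for some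
`E ∈ {A, B, C, D}`, and there `CZ_S` acts as `CZ_{S \ E}`, with `S \ E` inside the
complementary part.
-/

open scoped BigOperators

/-- The state space of `r` qubits: amplitudes indexed by bit strings of length `r`. -/
abbrev QState (r : ℕ) := (Fin r → Bool) → ℂ

/-- A unit vector on qubits indexed by a finite type. -/
def UnitVecOn {α : Type*} [Fintype α] [DecidableEq α] (ψ : (α → Bool) → ℂ) : Prop :=
  ∑ x, ‖ψ x‖ ^ 2 = 1

/-- The C-SIGN gate on the qubits in `S`: flips the sign of the amplitude exactly
when all bits in `S` are `1`. -/
noncomputable def czGate {r : ℕ} (S : Finset (Fin r)) (ψ : QState r) : QState r :=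
  fun x => if ∀ i ∈ S, x i = true then -ψ x else ψ x

/-- `{A, B}` is a bipartition of the qubits. -/
def Bipartition {r : ℕ} (A B : Finset (Fin r)) : Prop :=
  A.Nonempty ∧ B.Nonempty ∧ Disjoint A B ∧ A ∪ B = Finset.univ

/-- The tensor product of a state on the qubits in `A` with a state on the qubits
in `B` (for `{A,B}` a bipartition of the register). -/
noncomputable def tens {r : ℕ} (A B : Finset (Fin r))
    (ψA : ({i : Fin r // i ∈ A} → Bool) → ℂ) (ψB : ({i : Fin r // i ∈ B} → Bool) → ℂ) :
    QState r :=
  fun x => ψA (fun i => x i.1) * ψB (fun i => x i.1)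

open Finset

section

variable {r : ℕ}

/-- The `2 × 2` minors of the amplitude matrix `(x_E, x_{Eᶜ}) ↦ f x` vanish. -/
def RankOneAcross (E : Finset (Fin r)) (f : QState r) : Prop :=
  ∀ x y, f (E.piecewise x y) * f (E.piecewise y x) = f x * f y

def OnesOnSupport (u : QState r) (K : Finset (Fin r)) : Prop :=
  ∀ x, u x ≠ 0 → ∀ i ∈ K, x i = true

theorem tens_comm (A B : Finset (Fin r)) (ψA : ({i : Fin r // i ∈ A} → Bool) → ℂ)
    (ψB : ({i : Fin r // i ∈ B} → Bool) → ℂ) : tens A B ψA ψB = tens B A ψB ψA :=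
  funext fun _ => mul_comm _ _

theorem rankOneAcross_tens {A B : Finset (Fin r)} (hAB : Disjoint A B)
    (ψA : ({i : Fin r // i ∈ A} → Bool) → ℂ) (ψB : ({i : Fin r // i ∈ B} → Bool) → ℂ) :
    RankOneAcross A (tens A B ψA ψB) := by
  intro x y
  have hA : ∀ z z' : Fin r → Bool,
      (fun i : {i // i ∈ A} => A.piecewise z z' i.1) = fun i => z i.1 :=
    fun z z' => funext fun i => piecewise_eq_of_mem _ _ _ i.2
  have hB : ∀ z z' : Fin r → Bool,
      (fun i : {i // i ∈ B} => A.piecewise z z' i.1) = fun i => z' i.1 :=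
    fun z z' => funext fun i => piecewise_eq_of_notMem _ _ _ (disjoint_right.mp hAB i.2)
  simp only [tens, hA, hB]
  ring

theorem RankOneAcross.apply_piecewise_ne_zero {E : Finset (Fin r)} {f : QState r}
    (hf : RankOneAcross E f) {x y : Fin r → Bool} (hx : f x ≠ 0) (hy : f y ≠ 0) :
    f (E.piecewise x y) ≠ 0 :=
  left_ne_zero_of_mul (hf x y ▸ mul_ne_zero hx hy)

theorem OnesOnSupport.of_inter_of_inter {u : QState r} {K C D : Finset (Fin r)}
    (hCD : C ∪ D = univ) (hC : OnesOnSupport u (K ∩ C)) (hD : OnesOnSupport u (K ∩ D)) :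
    OnesOnSupport u K := by
  intro x hx i hi
  rcases mem_union.mp (hCD ▸ mem_univ i) with hiC | hiD
  · exact hC x hx i (mem_inter.mpr ⟨hi, hiC⟩)
  · exact hD x hx i (mem_inter.mpr ⟨hi, hiD⟩)

section czGate

variable {S : Finset (Fin r)} {u : QState r} {x : Fin r → Bool}

theorem czGate_apply_of_forall (hx : ∀ i ∈ S, x i = true) : czGate S u x = -u x :=
  if_pos hx

theorem czGate_apply_of_eq_false {i : Fin r} (hi : i ∈ S) (hx : x i = false) :
    czGate S u x = u x :=
  if_neg fun h => by simp [h i hi] at hx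

theorem czGate_apply_ne_zero_iff : czGate S u x ≠ 0 ↔ u x ≠ 0 := by
  unfold czGate; split_ifs <;> simp

theorem czGate_eq_self_iff : czGate S u = u ↔ ∀ x, (∀ i ∈ S, x i = true) → u x = 0 := by
  simp only [funext_iff, czGate]
  refine forall_congr' fun x => ?_
  by_cases hx : ∀ i ∈ S, x i = true
  · simp only [if_pos hx, neg_eq_self, forall_prop_of_true hx]
  · simp only [hx, if_false, false_implies]

theorem czGate_sdiff_of_onesOnSupport {E : Finset (Fin r)} (h : OnesOnSupport u (S ∩ E)) :
    czGate (S \ E) u = czGate S u := by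
  funext x
  by_cases hx : u x = 0
  · simp [czGate, hx]
  · refine if_congr ⟨fun hS i hi => ?_, fun hS i hi => hS i (sdiff_subset hi)⟩ rfl rfl
    by_cases hiE : i ∈ E
    · exact h x hx i (mem_inter.mpr ⟨hi, hiE⟩)
    · exact hS i (mem_sdiff.mpr ⟨hi, hiE⟩)

end czGate

theorem onesOnSupport_inter_or_inter {S A B C D : Finset (Fin r)} {u : QState r}
    {e : Fin r → Bool} (hAB : Disjoint A B) (hCD : Disjoint C D)
    (hu : RankOneAcross A u) (hΦ : RankOneAcross C (czGate S u))
    (he : u e ≠ 0) (heS : ∀ i ∈ S, e i = true) :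
    OnesOnSupport u (S ∩ A ∩ C) ∨ OnesOnSupport u (S ∩ B ∩ D) := by
  by_contra! hne
  simp only [OnesOnSupport, not_forall, Bool.not_eq_true, exists_prop, mem_inter] at hne
  obtain ⟨⟨p, hp, k, ⟨⟨hkS, hkA⟩, hkC⟩, hpk⟩, ⟨q, hq, l, ⟨⟨hlS, hlB⟩, hlD⟩, hql⟩⟩ := hne
  have hlA : l ∉ A := disjoint_right.mp hAB hlB
  have hlC : l ∉ C := disjoint_right.mp hCD hlD
  -- `x` is `p` on `A ∩ C`, `y` is `q` off `A ∪ C`, `z` is both, and all are `e` elsewhere.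
  set x := C.piecewise (A.piecewise p e) e
  set y := C.piecewise e (A.piecewise e q)
  set z := C.piecewise x y
  obtain ⟨hAze, hAez, hCze, hCez⟩ : A.piecewise z e = x ∧ A.piecewise e z = y ∧
      C.piecewise z e = x ∧ C.piecewise e z = y := by
    refine ⟨?_, ?_, ?_, ?_⟩ <;> funext i <;> by_cases hiA : i ∈ A <;> by_cases hiC : i ∈ C <;>
      simp [x, y, z, hiA, hiC]
  have hux : u x ≠ 0 := by
    rw [← czGate_apply_ne_zero_iff (S := S)]
    exact hΦ.apply_piecewise_ne_zero
      (czGate_apply_ne_zero_iff.mpr (hu.apply_piecewise_ne_zero hp he))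
      (czGate_apply_ne_zero_iff.mpr he)
  have huy : u y ≠ 0 := by
    rw [← czGate_apply_ne_zero_iff (S := S)]
    exact hΦ.apply_piecewise_ne_zero (czGate_apply_ne_zero_iff.mpr he)
      (czGate_apply_ne_zero_iff.mpr (hu.apply_piecewise_ne_zero he hq))
  have hminor_u := hu z e
  have hminor_Φ := hΦ z e
  rw [hAze, hAez] at hminor_u
  rw [hCze, hCez, czGate_apply_of_forall heS,
    czGate_apply_of_eq_false (x := x) hkS (by simp [x, hkA, hkC, hpk]),
    czGate_apply_of_eq_false (x := y) hlS (by simp [y, hlA, hlC, hql]),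
    czGate_apply_of_eq_false (x := z) hkS (by simp [z, x, hkA, hkC, hpk])] at hminor_Φ
  exact mul_ne_zero hux huy (by linear_combination (hminor_u + hminor_Φ) / 2)

end

theorem cz_on_separable_simplifies_general (r : ℕ) (S : Finset (Fin r))
    (A B C D : Finset (Fin r)) (hAB : Bipartition A B) (hCD : Bipartition C D)
    (ψA : ({i : Fin r // i ∈ A} → Bool) → ℂ)
    (ψB : ({i : Fin r // i ∈ B} → Bool) → ℂ)
    (φC : ({i : Fin r // i ∈ C} → Bool) → ℂ)
    (φD : ({i : Fin r // i ∈ D} → Bool) → ℂ)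
    (h : czGate S (tens A B ψA ψB) = tens C D φC φD) :
    czGate S (tens A B ψA ψB) = tens A B ψA ψB ∨
      ∃ T : Finset (Fin r), T ⊆ S ∧ (T ⊆ A ∨ T ⊆ B ∨ T ⊆ C ∨ T ⊆ D) ∧
        czGate S (tens A B ψA ψB) = czGate T (tens A B ψA ψB) ∧
        czGate S (tens A B ψA ψB) ≠ tens A B ψA ψB := by
  obtain ⟨-, -, hAB, hABu⟩ := hAB
  obtain ⟨-, -, hCD, hCDu⟩ := hCD
  by_cases hfix : czGate S (tens A B ψA ψB) = tens A B ψA ψB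
  · exact Or.inl hfix
  obtain ⟨e, heS, he⟩ : ∃ e, (∀ i ∈ S, e i = true) ∧ tens A B ψA ψB e ≠ 0 := by
    simpa [czGate_eq_self_iff] using hfix
  have hu := rankOneAcross_tens hAB ψA ψB
  have hACBD := onesOnSupport_inter_or_inter hAB hCD hu
    (h ▸ rankOneAcross_tens hCD φC φD) he heS
  have hADBC := onesOnSupport_inter_or_inter hAB hCD.symm hu
    (h ▸ tens_comm C D φC φD ▸ rankOneAcross_tens hCD.symm φD φC) he heS
  have hcover : ∀ {E F : Finset (Fin r)}, E ∪ F = univ → S \ E ⊆ F := fun hEF i hi =>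
    (mem_union.mp (hEF ▸ mem_univ i)).resolve_left (mem_sdiff.mp hi).2
  right
  rcases hACBD with hAC | hBD <;> rcases hADBC with hAD | hBC
  · exact ⟨S \ A, sdiff_subset, .inr (.inl (hcover hABu)),
      (czGate_sdiff_of_onesOnSupport (.of_inter_of_inter hCDu hAC hAD)).symm, hfix⟩
  · refine ⟨S \ C, sdiff_subset, .inr (.inr (.inr (hcover hCDu))),
      (czGate_sdiff_of_onesOnSupport (.of_inter_of_inter hABu ?_ ?_)).symm, hfix⟩
    · rwa [inter_right_comm]
    · rwa [inter_right_comm]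
  · refine ⟨S \ D, sdiff_subset, .inr (.inr (.inl (hcover (union_comm C D ▸ hCDu)))),
      (czGate_sdiff_of_onesOnSupport (.of_inter_of_inter hABu ?_ ?_)).symm, hfix⟩
    · rwa [inter_right_comm]
    · rwa [inter_right_comm]
  · exact ⟨S \ B, sdiff_subset, .inl (hcover (union_comm A B ▸ hABu)),
      (czGate_sdiff_of_onesOnSupport (.of_inter_of_inter hCDu hBC hBD)).symm, hfix⟩

theorem cz_on_separable_simplifies (r : ℕ) (hr : 1 ≤ r) (S : Finset (Fin r))
    (A B C D : Finset (Fin r)) (hAB : Bipartition A B) (hCD : Bipartition C D)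
    (ψA : ({i : Fin r // i ∈ A} → Bool) → ℂ) (hψA : UnitVecOn ψA)
    (ψB : ({i : Fin r // i ∈ B} → Bool) → ℂ) (hψB : UnitVecOn ψB)
    (φC : ({i : Fin r // i ∈ C} → Bool) → ℂ) (hφC : UnitVecOn φC)
    (φD : ({i : Fin r // i ∈ D} → Bool) → ℂ) (hφD : UnitVecOn φD)
    (h : czGate S (tens A B ψA ψB) = tens C D φC φD) :
    czGate S (tens A B ψA ψB) = tens A B ψA ψB ∨
      ∃ T : Finset (Fin r), T ⊆ S ∧ (T ⊆ A ∨ T ⊆ B ∨ T ⊆ C ∨ T ⊆ D) ∧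
        czGate S (tens A B ψA ψB) = czGate T (tens A B ψA ψB) ∧
        czGate S (tens A B ψA ψB) ≠ tens A B ψA ψB :=
  cz_on_separable_simplifies_general r S A B C D hAB hCD ψA ψB φC φD h
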